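/- Hessian determinant at the last-layer padded point (case i): let p ≥ 1 and let (β⋆,γ⋆) ∈ ℝ^p × ℝ^p be a critical point of E_p. Let H_p denote the Hessian of E_p at (β⋆,γ⋆), let H_{p+1} denote the Hessian of E_{p+1} at the padded point Γ^{p+1}(p+1,p+1), and set b = ∂²E_{p+1}/∂β_{p+1}∂γ_{p+1} evaluated at Γ^{p+1}(p+1,p+1). Then b = ⟨β⋆,γ⋆| [[H_B, H_C], H_C] |β⋆,γ⋆⟩ (where |β⋆,γ⋆⟩ is the depth-p QAOA state), ∂²E_{p+1}/∂γ_{p+1}² vanishes at Γ^{p+1}(p+1,p+1), and if b ≠ 0 then det H_{p+1} = -b² · det H_p. -/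

import Mathlib

/-!
Let `ψ` be the depth-`p` state. Near the padded point `Γ` the last layer is `U_B(t) U_C(s)`, so
`E_{p+1}(Γ + t e_{β_{p+1}} + s e_{γ_{p+1}}) = ⟨ψ| U_C(s)† U_B(t)† H_C U_B(t) U_C(s) |ψ⟩`.
On the hyperplane `β_{p+1} = 0` the last layer is `U_C(γ_{p+1})`, which commutes with `H_C`, so
`E_{p+1}` does not depend on `γ_{p+1}` there. Hence the `γ_{p+1}` row and column of the Hessian at
`Γ` vanish except for the mixed entry `b`, and a Schur complement with respect to the last two
coordinates gives `det H_{p+1} = -b² det H_p`, because `E_p = E_{p+1} ∘ pad` identifies `H_p` with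
the remaining block. Differentiating the formula above once in `s` and once in `t` at `0` gives
`b = ⟨ψ| [[H_B, H_C], H_C] |ψ⟩`.
-/

open Matrix Complex

noncomputable section

/-- Computational basis index set for `n` qubits, identified with `Fin 2 ^ n` via binary digits. -/
abbrev QIdx (n : ℕ) := Fin n → Fin 2

/-- The Pauli X matrix. -/
def pauliX : Matrix (Fin 2) (Fin 2) ℂ := !![0, 1; 1, 0]

/-- The Pauli Z matrix. -/
def pauliZ : Matrix (Fin 2) (Fin 2) ℂ := !![1, 0; 0, -1]

/-- The `n`-fold Kronecker product with `M` in the `i`-th tensor factor and the 2×2 identity in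
every other factor, realized as a matrix on `ℂ^(2^n)` with indices `Fin n → Fin 2`. -/
def pauliAt {n : ℕ} (M : Matrix (Fin 2) (Fin 2) ℂ) (i : Fin n) :
    Matrix (QIdx n) (QIdx n) ℂ :=
  Matrix.of fun s t => ∏ j, if j = i then M (s j) (t j) else if s j = t j then 1 else 0

/-- `σ^x_i`. -/
def sigmaX {n : ℕ} (i : Fin n) : Matrix (QIdx n) (QIdx n) ℂ := pauliAt pauliX i

/-- `σ^z_i`. -/
def sigmaZ {n : ℕ} (i : Fin n) : Matrix (QIdx n) (QIdx n) ℂ := pauliAt pauliZ i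

lemma sigmaZ_eq_diagonal {n : ℕ} (i : Fin n) :
    sigmaZ i = Matrix.diagonal (fun s => pauliZ (s i) (s i)) := by
  ext s t
  simp only [sigmaZ, pauliAt, Matrix.of_apply, Matrix.diagonal_apply]
  by_cases h : s = t
  · subst h
    simp [Finset.prod_ite_eq']
  · rw [if_neg h]
    obtain ⟨j₀, hj₀⟩ := Function.ne_iff.mp h
    refine Finset.prod_eq_zero (Finset.mem_univ j₀) ?_
    by_cases hji : j₀ = i
    · subst hji
      rw [if_pos rfl]
      have hz : ∀ a b : Fin 2, a ≠ b → pauliZ a b = 0 := by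
        intro a b hab
        fin_cases a <;> fin_cases b <;> simp_all [pauliZ]
      exact hz _ _ hj₀
    · rw [if_neg hji, if_neg hj₀]

lemma sigmaZ_mul_comm {n : ℕ} (i j : Fin n) : sigmaZ i * sigmaZ j = sigmaZ j * sigmaZ i := by
  rw [sigmaZ_eq_diagonal, sigmaZ_eq_diagonal, Matrix.diagonal_mul_diagonal,
    Matrix.diagonal_mul_diagonal]
  ext s
  simp [mul_comm]

/-- The MaxCut Hamiltonian `H_C = Σ_{{i,j} ∈ E} σ^z_i σ^z_j`. -/
def hamC (n : ℕ) (G : SimpleGraph (Fin n)) [DecidableRel G.Adj] :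
    Matrix (QIdx n) (QIdx n) ℂ :=
  ∑ e ∈ G.edgeFinset,
    Sym2.lift ⟨fun i j => sigmaZ i * sigmaZ j, fun i j => sigmaZ_mul_comm i j⟩ e

/-- The mixing Hamiltonian `H_B = -Σ_i σ^x_i`. -/
def hamB (n : ℕ) : Matrix (QIdx n) (QIdx n) ℂ := -(∑ i : Fin n, sigmaX i)

/-- `U_B(β) = exp(-i β H_B)`. -/
def uB (n : ℕ) (β : ℝ) : Matrix (QIdx n) (QIdx n) ℂ :=
  NormedSpace.exp ((-(Complex.I) * (β : ℂ)) • hamB n)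

/-- `U_C(γ) = exp(-i γ H_C)`. -/
def uC (n : ℕ) (G : SimpleGraph (Fin n)) [DecidableRel G.Adj] (γ : ℝ) :
    Matrix (QIdx n) (QIdx n) ℂ :=
  NormedSpace.exp ((-(Complex.I) * (γ : ℂ)) • hamC n G)

/-- The plus state `|+⟩ = 2^{-n/2} (1,…,1)ᵀ`. -/
def plusState (n : ℕ) : QIdx n → ℂ := fun _ => ((Real.sqrt 2 : ℂ))⁻¹ ^ n

/-- The `m`-th layer `U_B(β_{m+1}) U_C(γ_{m+1})` of the QAOA circuit (`m` is 0-indexed);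
`1` if `m` is out of range. -/
def qaoaLayer (n : ℕ) (G : SimpleGraph (Fin n)) [DecidableRel G.Adj] {p : ℕ}
    (β γ : Fin p → ℝ) (m : ℕ) : Matrix (QIdx n) (QIdx n) ℂ :=
  if h : m < p then uB n (β ⟨m, h⟩) * uC n G (γ ⟨m, h⟩) else 1

/-- The ordered product of the (0-indexed) layers `a, a+1, …, a+len-1` of the QAOA circuit, with
higher layers acting later (to the left). -/
def uProd (n : ℕ) (G : SimpleGraph (Fin n)) [DecidableRel G.Adj] {p : ℕ}
    (β γ : Fin p → ℝ) (a len : ℕ) : Matrix (QIdx n) (QIdx n) ℂ :=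
  (((List.range' a len).reverse).map (qaoaLayer n G β γ)).prod

/-- The depth-`p` QAOA state `|β,γ⟩ = U_B(β_p) U_C(γ_p) ⋯ U_B(β_1) U_C(γ_1) |+⟩`. -/
def qaoaState (n : ℕ) (G : SimpleGraph (Fin n)) [DecidableRel G.Adj] {p : ℕ}
    (β γ : Fin p → ℝ) : QIdx n → ℂ :=
  (uProd n G β γ 0 p).mulVec (plusState n)

/-- The depth-`p` QAOA cost function `E_p(β,γ) = ⟨β,γ| H_C |β,γ⟩` as a real-valued function on
`ℝ^p × ℝ^p`. -/
def energyE (n : ℕ) (G : SimpleGraph (Fin n)) [DecidableRel G.Adj] (p : ℕ)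
    (x : (Fin p → ℝ) × (Fin p → ℝ)) : ℝ :=
  (star (qaoaState n G x.1 x.2) ⬝ᵥ (hamC n G).mulVec (qaoaState n G x.1 x.2)).re

/-- The point `Γ^{p+1}(i,j)` obtained from `(β⋆,γ⋆) ∈ ℝ^p × ℝ^p` by inserting a `0` at
position `i` in the `β`-part and at position `j` in the `γ`-part. -/
def padded {p : ℕ} (x : (Fin p → ℝ) × (Fin p → ℝ)) (i j : Fin (p + 1)) :
    (Fin (p + 1) → ℝ) × (Fin (p + 1) → ℝ) :=
  (i.insertNth 0 x.1, j.insertNth 0 x.2)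

/-- The coordinate direction in `ℝ^p × ℝ^p` corresponding to `β_l` (`Sum.inl l`) or
`γ_l` (`Sum.inr l`). -/
def coordDir {p : ℕ} : Fin p ⊕ Fin p → (Fin p → ℝ) × (Fin p → ℝ) :=
  Sum.elim (fun l => (Pi.single l 1, 0)) (fun l => (0, Pi.single l 1))

/-- Partial derivative of a real function on `ℝ^p × ℝ^p` in the coordinate direction `a`. -/
def pderiv' {p : ℕ} (f : ((Fin p → ℝ) × (Fin p → ℝ)) → ℝ)
    (a : Fin p ⊕ Fin p) (x : (Fin p → ℝ) × (Fin p → ℝ)) : ℝ :=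
  fderiv ℝ f x (coordDir a)

/-- The Hessian matrix of a real function on `ℝ^p × ℝ^p`, with rows and columns indexed by the
coordinates `β_1,…,β_p` (`Sum.inl`) and `γ_1,…,γ_p` (`Sum.inr`). -/
def hessian {p : ℕ} (f : ((Fin p → ℝ) × (Fin p → ℝ)) → ℝ)
    (x : (Fin p → ℝ) × (Fin p → ℝ)) : Matrix (Fin p ⊕ Fin p) (Fin p ⊕ Fin p) ℝ :=
  Matrix.of fun a b => pderiv' (pderiv' f b) a x

/-- The commutator `[A, B] = AB - BA`. -/
def commMat {n : ℕ} (A B : Matrix (QIdx n) (QIdx n) ℂ) : Matrix (QIdx n) (QIdx n) ℂ :=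
  A * B - B * A

end

open NormedSpace

attribute [local instance] Matrix.linftyOpNormedAddCommGroup Matrix.linftyOpNormedRing
  Matrix.linftyOpNormedAlgebra

section Hamiltonians

variable {n : ℕ}

lemma pauliX_isHermitian : pauliX.IsHermitian := by
  ext a b; fin_cases a <;> fin_cases b <;> simp [pauliX]

lemma pauliZ_isHermitian : pauliZ.IsHermitian := by
  ext a b; fin_cases a <;> fin_cases b <;> simp [pauliZ]

lemma isHermitian_pauliAt {M : Matrix (Fin 2) (Fin 2) ℂ} (hM : M.IsHermitian) (i : Fin n) :
    (pauliAt M i).IsHermitian := by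
  refine Matrix.IsHermitian.ext fun s t => ?_
  unfold pauliAt
  simp only [Matrix.of_apply, star_prod]
  refine Finset.prod_congr rfl fun j _ => ?_
  split_ifs <;> simp_all [eq_comm, hM.apply]

lemma hamB_isHermitian : (hamB n).IsHermitian :=
  (isSelfAdjoint_sum _ fun i _ => (isHermitian_pauliAt pauliX_isHermitian i : IsSelfAdjoint _)).neg

lemma hamC_isHermitian (G : SimpleGraph (Fin n)) [DecidableRel G.Adj] :
    (hamC n G).IsHermitian := by
  refine isSelfAdjoint_sum _ fun e _ => ?_
  induction e using Sym2.ind with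
  | _ i j =>
    have hi := isHermitian_pauliAt pauliZ_isHermitian i
    have hj := isHermitian_pauliAt pauliZ_isHermitian j
    exact (hi.commute_iff hj).mp (sigmaZ_mul_comm i j)

lemma isHermitian_commMat_commMat {A B : Matrix (QIdx n) (QIdx n) ℂ}
    (hA : A.IsHermitian) (hB : B.IsHermitian) : (commMat (commMat A B) B).IsHermitian := by
  simp only [Matrix.IsHermitian, commMat, Matrix.conjTranspose_sub, Matrix.conjTranspose_mul,
    hA.eq, hB.eq]
  noncomm_ring

end Hamiltonians

section Evolution

variable {m : Type*} [Fintype m] [DecidableEq m]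

lemma exp_neg_I_mul_smul (H : Matrix m m ℂ) (t : ℝ) :
    exp ((-I * t) • H) = exp (t • (-I • H)) := by
  rw [← smul_assoc, Complex.real_smul, mul_comm]

lemma hasDerivAt_exp_neg_I_mul_smul (H : Matrix m m ℂ) :
    HasDerivAt (fun t : ℝ => exp ((-I * t) • H)) (-I • H) 0 := by
  have h := hasDerivAt_exp_smul_const (-I • H) (0 : ℝ)
  rw [zero_smul, NormedSpace.exp_zero, one_mul] at h
  simp only [exp_neg_I_mul_smul]
  exact h

lemma contDiff_exp_neg_I_mul_smul (H : Matrix m m ℂ) {k : WithTop ℕ∞} :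
    ContDiff ℝ k (fun t : ℝ => exp ((-I * t) • H)) := by
  simp only [exp_neg_I_mul_smul]
  exact contDiff_iff_contDiffAt.2 (fun x => (exp_analytic (𝕂 := ℝ) x).contDiffAt) |>.comp
    (contDiff_id.smul contDiff_const)

lemma Matrix.IsHermitian.conjTranspose_exp_mul_mul_exp {H : Matrix m m ℂ} (hH : H.IsHermitian)
    (t : ℝ) :
    (NormedSpace.exp ((-I * t) • H))ᴴ * H * NormedSpace.exp ((-I * t) • H) = H := by
  have hcomm : Commute H ((-I * t) • H) := (Commute.refl H).smul_right _
  rw [← Matrix.exp_conjTranspose, Matrix.conjTranspose_smul, hH.eq, Matrix.mul_assoc,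
    hcomm.exp_right.eq, ← Matrix.mul_assoc, ← Matrix.exp_add_of_commute _ _
      ((Commute.refl H).smul_left _ |>.smul_right _), ← add_smul]
  simp

lemma ContDiff.conjTranspose {E : Type*} [NormedAddCommGroup E] [NormedSpace ℝ E]
    {k : WithTop ℕ∞} {f : E → Matrix m m ℂ} (hf : ContDiff ℝ k f) :
    ContDiff ℝ k (fun x => (f x)ᴴ) :=
  (starL' ℝ (A := Matrix m m ℂ)).contDiff.comp hf

lemma HasDerivAt.conjTranspose_mul_mul {F K : ℝ → Matrix m m ℂ} {F' K' : Matrix m m ℂ} {t : ℝ}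
    (hF : HasDerivAt F F' t) (hK : HasDerivAt K K' t) (C : Matrix m m ℂ) :
    HasDerivAt (fun s => (F s)ᴴ * C * K s) (F'ᴴ * C * K t + (F t)ᴴ * C * K') t :=
  ((((starL' ℝ (A := Matrix m m ℂ)).hasFDerivAt.comp_hasDerivAt t hF).mul_const C).mul hK :)

end Evolution

lemma uB_zero {n : ℕ} : uB n 0 = 1 := by simp [uB]

lemma uC_zero {n : ℕ} (G : SimpleGraph (Fin n)) [DecidableRel G.Adj] : uC n G 0 = 1 := by
  simp [uC]

section Expectation

variable {m : Type*} [Fintype m]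

noncomputable def expectation (ψ : m → ℂ) : Matrix m m ℂ →L[ℝ] ℝ :=
  LinearMap.toContinuousLinearMap
    { toFun := fun M => (star ψ ⬝ᵥ M *ᵥ ψ).re
      map_add' := fun M N => by simp [Matrix.add_mulVec]
      map_smul' := fun c M => by simp [Matrix.smul_mulVec] }

lemma expectation_apply (ψ : m → ℂ) (M : Matrix m m ℂ) :
    expectation ψ M = (star ψ ⬝ᵥ M *ᵥ ψ).re := rfl

lemma re_star_mulVec_dotProduct_mulVec (A C : Matrix m m ℂ) (ψ : m → ℂ) :
    (star (A *ᵥ ψ) ⬝ᵥ C *ᵥ (A *ᵥ ψ)).re = expectation ψ (Aᴴ * C * A) := by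
  rw [expectation_apply, Matrix.star_mulVec, Matrix.mulVec_mulVec, ← Matrix.dotProduct_mulVec,
    Matrix.mulVec_mulVec, Matrix.mul_assoc]

lemma Matrix.IsHermitian.coe_expectation {M : Matrix m m ℂ} (hM : M.IsHermitian) (ψ : m → ℂ) :
    (expectation ψ M : ℂ) = star ψ ⬝ᵥ M *ᵥ ψ :=
  Complex.ext rfl (hM.im_star_dotProduct_mulVec_self ψ).symm

end Expectation

section Circuit

variable {n : ℕ} (G : SimpleGraph (Fin n)) [DecidableRel G.Adj]

lemma uProd_succ {p : ℕ} (β γ : Fin p → ℝ) (a len : ℕ) :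
    uProd n G β γ a (len + 1) = qaoaLayer n G β γ (a + len) * uProd n G β γ a len := by
  simp [uProd, List.range'_concat]

lemma qaoaState_succ {p : ℕ} (β γ : Fin (p + 1) → ℝ) :
    qaoaState n G β γ = (uB n (β (Fin.last p)) * uC n G (γ (Fin.last p))) *ᵥ
      qaoaState n G (Fin.init β) (Fin.init γ) := by
  have hlayers : uProd n G β γ 0 p = uProd n G (Fin.init β) (Fin.init γ) 0 p := by
    refine congrArg List.prod (List.map_congr_left fun m hm => ?_)
    rw [List.mem_reverse, List.mem_range'_1, zero_add] at hm
    simp [qaoaLayer, hm.2, Nat.lt_succ_of_lt hm.2, Fin.init]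
  rw [qaoaState, qaoaState, uProd_succ, zero_add, hlayers, ← Matrix.mulVec_mulVec]
  simp [qaoaLayer, Fin.last]

lemma energyE_eq_expectation {p : ℕ} (x : (Fin p → ℝ) × (Fin p → ℝ)) :
    energyE n G p x = expectation (plusState n)
      ((uProd n G x.1 x.2 0 p)ᴴ * hamC n G * uProd n G x.1 x.2 0 p) :=
  re_star_mulVec_dotProduct_mulVec _ _ _

lemma energyE_succ {p : ℕ} (x : (Fin (p + 1) → ℝ) × (Fin (p + 1) → ℝ)) :
    energyE n G (p + 1) x = expectation (qaoaState n G (Fin.init x.1) (Fin.init x.2))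
      ((uB n (x.1 (Fin.last p)) * uC n G (x.2 (Fin.last p)))ᴴ * hamC n G *
        (uB n (x.1 (Fin.last p)) * uC n G (x.2 (Fin.last p)))) := by
  rw [energyE, qaoaState_succ, re_star_mulVec_dotProduct_mulVec]

lemma energyE_succ_of_fst_last_eq_zero {p : ℕ} {x : (Fin (p + 1) → ℝ) × (Fin (p + 1) → ℝ)}
    (hx : x.1 (Fin.last p) = 0) :
    energyE n G (p + 1) x = energyE n G p (Fin.init x.1, Fin.init x.2) := by
  rw [energyE_succ, hx, uB_zero, Matrix.one_mul, uC,
    (hamC_isHermitian G).conjTranspose_exp_mul_mul_exp, energyE, expectation_apply]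

end Circuit

section Smoothness

variable {n : ℕ} (G : SimpleGraph (Fin n)) [DecidableRel G.Adj]

lemma contDiff_uProd {p : ℕ} {k : WithTop ℕ∞} (a len : ℕ) :
    ContDiff ℝ k (fun x : (Fin p → ℝ) × (Fin p → ℝ) => uProd n G x.1 x.2 a len) := by
  induction len with
  | zero => simpa [uProd] using contDiff_const
  | succ len ih =>
    simp only [uProd_succ]
    refine ContDiff.mul ?_ ih
    by_cases h : a + len < p
    · simp only [qaoaLayer, h, dite_true]
      exact ((contDiff_exp_neg_I_mul_smul (hamB n)).comp
          ((contDiff_apply ℝ ℝ _).comp contDiff_fst)).mul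
        ((contDiff_exp_neg_I_mul_smul (hamC n G)).comp ((contDiff_apply ℝ ℝ _).comp contDiff_snd))
    · simpa only [qaoaLayer, h, dite_false] using contDiff_const

lemma contDiff_energyE (p : ℕ) {k : WithTop ℕ∞} : ContDiff ℝ k (energyE n G p) := by
  have hU := contDiff_uProd G (p := p) (k := k) 0 p
  rw [funext (energyE_eq_expectation G)]
  exact (expectation _).contDiff.comp ((hU.conjTranspose.mul contDiff_const).mul hU)

end Smoothness

section Calculus

variable {E : Type*} [NormedAddCommGroup E] [NormedSpace ℝ E]

lemma fderiv_apply_eq_of_hasDerivAt_line {f : E → ℝ} {x v : E} {d : ℝ}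
    (hf : DifferentiableAt ℝ f x) (h : HasDerivAt (fun t : ℝ => f (x + t • v)) d 0) :
    fderiv ℝ f x v = d :=
  hf.lineDeriv_eq_fderiv.symm.trans (HasLineDerivAt.lineDeriv h)

lemma fderiv_apply_eq_zero_of_const_on_line {f : E → ℝ} {x v : E}
    (hf : DifferentiableAt ℝ f x) (h : ∀ t : ℝ, f (x + t • v) = f x) : fderiv ℝ f x v = 0 :=
  fderiv_apply_eq_of_hasDerivAt_line hf (by simpa only [h] using hasDerivAt_const (0 : ℝ) (f x))

lemma differentiable_fderiv_apply {f : E → ℝ} (hf : ContDiff ℝ 2 f) (v : E) :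
    Differentiable ℝ (fun x => fderiv ℝ f x v) :=
  fun x => ((ContinuousLinearMap.apply ℝ ℝ v).differentiableAt).comp x
    ((hf.fderiv_right (m := 1) (by norm_num)).differentiable one_ne_zero x)

lemma fderiv_fderiv_apply_eq_of_hasDerivAt {f : E → ℝ} (hf : ContDiff ℝ 2 f) {x u v : E}
    {φ : ℝ → ℝ} {c : ℝ} (hφ : ∀ t, HasDerivAt (fun s : ℝ => f (x + t • u + s • v)) (φ t) 0)
    (hc : HasDerivAt φ c 0) :
    fderiv ℝ (fun y => fderiv ℝ f y v) x u = c := by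
  refine fderiv_apply_eq_of_hasDerivAt_line (differentiable_fderiv_apply hf v x) ?_
  have hline : (fun t : ℝ => fderiv ℝ f (x + t • u) v) = φ := funext fun t =>
    fderiv_apply_eq_of_hasDerivAt_line (hf.differentiable (by norm_num) _) (hφ t)
  rwa [hline]

lemma fderiv_fderiv_apply_comm {f : E → ℝ} (hf : ContDiff ℝ 2 f) (x u v : E) :
    fderiv ℝ (fun y => fderiv ℝ f y v) x u = fderiv ℝ (fun y => fderiv ℝ f y u) x v := by
  have hsnd (u v : E) :
      fderiv ℝ (fun y => fderiv ℝ f y v) x u = fderiv ℝ (fderiv ℝ f) x u v := by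
    rw [fderiv_clm_apply ((hf.fderiv_right (m := 1) (by norm_num)).differentiable one_ne_zero x)
      (differentiableAt_const v)]
    simp
  rw [hsnd, hsnd]
  exact (hf.contDiffAt.isSymmSndFDerivAt (by simp [minSmoothness_of_isRCLikeNormedField])).eq _ _

end Calculus

section Padding

variable {p : ℕ}

noncomputable def padLast (p : ℕ) :
    (Fin p → ℝ) × (Fin p → ℝ) →L[ℝ] (Fin (p + 1) → ℝ) × (Fin (p + 1) → ℝ) :=
  LinearMap.toContinuousLinearMap
    { toFun := fun x => padded x (Fin.last p) (Fin.last p)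
      map_add' := fun x y => by
        ext j <;> induction j using Fin.lastCases <;> simp [padded, Fin.insertNth_last']
      map_smul' := fun c x => by
        ext j <;> induction j using Fin.lastCases <;> simp [padded, Fin.insertNth_last'] }

lemma padLast_apply (x : (Fin p → ℝ) × (Fin p → ℝ)) :
    padLast p x = (Fin.snoc x.1 0, Fin.snoc x.2 0) := by
  simp [padLast, padded, Fin.insertNth_last']

lemma padLast_coordDir (a : Fin p ⊕ Fin p) :
    padLast p (coordDir a) = coordDir (Sum.map Fin.castSucc Fin.castSucc a) := by
  rcases a with l | l <;> ext j <;> induction j using Fin.lastCases <;>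
    simp [padLast_apply, coordDir, Pi.single_apply, (Fin.castSucc_lt_last l).ne']

lemma pderiv'_comp_padLast {f : (Fin (p + 1) → ℝ) × (Fin (p + 1) → ℝ) → ℝ}
    (hf : Differentiable ℝ f) (a : Fin p ⊕ Fin p) (x : (Fin p → ℝ) × (Fin p → ℝ)) :
    pderiv' (fun y => f (padLast p y)) a x =
      pderiv' f (Sum.map Fin.castSucc Fin.castSucc a) (padLast p x) := by
  change fderiv ℝ (f ∘ padLast p) x _ = _
  rw [pderiv', ← padLast_coordDir, fderiv_comp x (hf _) (padLast p).differentiableAt,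
    (padLast p).fderiv]
  rfl

lemma hessian_comp_padLast {f : (Fin (p + 1) → ℝ) × (Fin (p + 1) → ℝ) → ℝ}
    (hf : ContDiff ℝ 2 f) (x : (Fin p → ℝ) × (Fin p → ℝ)) :
    hessian (fun y => f (padLast p y)) x =
      (hessian f (padLast p x)).submatrix (Sum.map Fin.castSucc Fin.castSucc)
        (Sum.map Fin.castSucc Fin.castSucc) := by
  ext a b
  have hfirst : pderiv' (fun y => f (padLast p y)) b =
      fun y => pderiv' f (Sum.map Fin.castSucc Fin.castSucc b) (padLast p y) :=
    funext (pderiv'_comp_padLast (hf.differentiable (by norm_num)) b)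
  simp only [hessian, Matrix.of_apply, Matrix.submatrix_apply, hfirst]
  exact pderiv'_comp_padLast (differentiable_fderiv_apply hf _) a x

end Padding

section HessianAtPadded

variable {n : ℕ} (G : SimpleGraph (Fin n)) [DecidableRel G.Adj] {p : ℕ}

lemma energyE_padLast (x : (Fin p → ℝ) × (Fin p → ℝ)) :
    energyE n G (p + 1) (padLast p x) = energyE n G p x := by
  rw [energyE_succ_of_fst_last_eq_zero G (by simp [padLast_apply])]
  simp [padLast_apply]

lemma hessian_energyE_eq_submatrix (x : (Fin p → ℝ) × (Fin p → ℝ)) :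
    hessian (energyE n G p) x =
      (hessian (energyE n G (p + 1)) (padLast p x)).submatrix (Sum.map Fin.castSucc Fin.castSucc)
        (Sum.map Fin.castSucc Fin.castSucc) := by
  rw [← hessian_comp_padLast (contDiff_energyE G (p + 1)) x]
  simp only [energyE_padLast]

lemma pderiv'_gamma_last_eq_zero {x : (Fin (p + 1) → ℝ) × (Fin (p + 1) → ℝ)}
    (hx : x.1 (Fin.last p) = 0) : pderiv' (energyE n G (p + 1)) (Sum.inr (Fin.last p)) x = 0 := by
  refine fderiv_apply_eq_zero_of_const_on_line
    ((contDiff_energyE G _ (k := 1)).differentiable one_ne_zero _) fun t => ?_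
  have hfst : (x + t • coordDir (Sum.inr (Fin.last p))).1 = x.1 := by simp [coordDir]
  have hsnd : Fin.init (x + t • coordDir (Sum.inr (Fin.last p))).2 = Fin.init x.2 := by
    funext l
    simp [Fin.init, coordDir, (Fin.castSucc_lt_last l).ne]
  rw [energyE_succ_of_fst_last_eq_zero G (hfst ▸ hx), energyE_succ_of_fst_last_eq_zero G hx, hfst,
    hsnd]

lemma pderiv'_pderiv'_gamma_last_eq_zero {x : (Fin (p + 1) → ℝ) × (Fin (p + 1) → ℝ)}
    (hx : x.1 (Fin.last p) = 0) {a : Fin (p + 1) ⊕ Fin (p + 1)} (ha : a ≠ Sum.inl (Fin.last p)) :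
    pderiv' (pderiv' (energyE n G (p + 1)) (Sum.inr (Fin.last p))) a x = 0 := by
  refine fderiv_apply_eq_zero_of_const_on_line
    (differentiable_fderiv_apply (contDiff_energyE G _) _ x) fun t => ?_
  have hdir : (coordDir a).1 (Fin.last p) = 0 := by
    rcases a with l | l
    · simpa [coordDir, Pi.single_apply, eq_comm] using ha
    · simp [coordDir]
  rw [pderiv'_gamma_last_eq_zero G (by simp [hx, hdir]), pderiv'_gamma_last_eq_zero G hx]

end HessianAtPadded

section MixedDerivative

variable {n : ℕ} (G : SimpleGraph (Fin n)) [DecidableRel G.Adj] {p : ℕ}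

lemma energyE_padLast_add (β γ : Fin p → ℝ) (t s : ℝ) :
    energyE n G (p + 1) (padLast p (β, γ) + t • coordDir (Sum.inl (Fin.last p)) +
        s • coordDir (Sum.inr (Fin.last p))) =
      expectation (qaoaState n G β γ) ((uB n t * uC n G s)ᴴ * hamC n G * (uB n t * uC n G s)) := by
  set z := padLast p (β, γ) + t • coordDir (Sum.inl (Fin.last p)) +
    s • coordDir (Sum.inr (Fin.last p))
  have hlast : z.1 (Fin.last p) = t ∧ z.2 (Fin.last p) = s := by
    simp [z, padLast_apply, coordDir]
  have hinit : Fin.init z.1 = β ∧ Fin.init z.2 = γ := by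
    constructor <;> funext l <;>
      simp [z, padLast_apply, coordDir, Fin.init, (Fin.castSucc_lt_last l).ne]
  rw [energyE_succ, hlast.1, hlast.2, hinit.1, hinit.2]

lemma ofReal_pderiv'_pderiv'_beta_gamma_last (β γ : Fin p → ℝ) :
    ((pderiv' (pderiv' (energyE n G (p + 1)) (Sum.inr (Fin.last p))) (Sum.inl (Fin.last p))
        (padLast p (β, γ)) : ℝ) : ℂ) =
      star (qaoaState n G β γ) ⬝ᵥ
        (commMat (commMat (hamB n) (hamC n G)) (hamC n G)) *ᵥ qaoaState n G β γ := by
  set ψ := qaoaState n G β γ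
  set B := hamB n
  set C := hamC n G
  have hU : HasDerivAt (fun t : ℝ => uB n t) (-I • B) 0 := hasDerivAt_exp_neg_I_mul_smul B
  have hV : HasDerivAt (fun s : ℝ => uC n G s) (-I • C) 0 := hasDerivAt_exp_neg_I_mul_smul C
  have hUV (t : ℝ) : HasDerivAt (fun s : ℝ => uB n t * uC n G s) (uB n t * (-I • C)) 0 :=
    hV.const_mul (uB n t)
  have hUC : HasDerivAt (fun t : ℝ => uB n t * (-I • C)) ((-I • B) * (-I • C)) 0 :=
    hU.mul_const _
  have hφ (t : ℝ) := (expectation ψ).hasFDerivAt.comp_hasDerivAt (0 : ℝ)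
    ((hUV t).conjTranspose_mul_mul (hUV t) C)
  have hc := (expectation ψ).hasFDerivAt.comp_hasDerivAt (0 : ℝ)
    ((hUC.conjTranspose_mul_mul hU C).add (hU.conjTranspose_mul_mul hUC C))
  simp only [uC_zero, Matrix.mul_one] at hφ
  simp only [uB_zero, Matrix.conjTranspose_one, Matrix.one_mul, Matrix.mul_one] at hc
  have hsecond := fderiv_fderiv_apply_eq_of_hasDerivAt (contDiff_energyE G (p + 1))
    (x := padLast p (β, γ)) (fun t => (hφ t).congr_of_eventuallyEq
      (Filter.Eventually.of_forall fun s => energyE_padLast_add G β γ t s)) hc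
  have hB : B.IsHermitian := hamB_isHermitian
  have hC : C.IsHermitian := hamC_isHermitian G
  rw [← (isHermitian_commMat_commMat hB hC).coe_expectation ψ, Complex.ofReal_inj]
  refine hsecond.trans (congrArg _ ?_)
  simp only [commMat, Matrix.conjTranspose_mul, Matrix.conjTranspose_smul, Matrix.conjTranspose_neg,
    hB.eq, hC.eq, RCLike.star_def, Complex.conj_I, Algebra.mul_smul_comm, Algebra.smul_mul_assoc,
    neg_smul, smul_neg, mul_neg, neg_mul, neg_neg, smul_smul, Complex.I_mul_I, one_smul]
  noncomm_ring

end MixedDerivative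

lemma Matrix.det_eq_neg_mul_det_toBlocks₁₁ {ι R : Type*} [Fintype ι] [DecidableEq ι] [Field R]
    (M : Matrix (ι ⊕ Fin 2) (ι ⊕ Fin 2) R) (hcol : ∀ i, M (Sum.inl i) (Sum.inr 1) = 0)
    (hrow : ∀ j, M (Sum.inr 1) (Sum.inl j) = 0) (h11 : M (Sum.inr 1) (Sum.inr 1) = 0) :
    M.det = -(M (Sum.inr 0) (Sum.inr 1) * M (Sum.inr 1) (Sum.inr 0)) * M.toBlocks₁₁.det := by
  by_cases hb : M (Sum.inr 0) (Sum.inr 1) * M (Sum.inr 1) (Sum.inr 0) = 0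
  · rw [hb, neg_zero, zero_mul]
    rcases mul_eq_zero.mp hb with h | h
    · refine Matrix.det_eq_zero_of_column_eq_zero (Sum.inr 1) fun i => ?_
      rcases i with i | k
      · exact hcol i
      · fin_cases k <;> assumption
    · refine Matrix.det_eq_zero_of_row_eq_zero (Sum.inr 1) fun j => ?_
      rcases j with j | k
      · exact hrow j
      · fin_cases k <;> assumption
  · have hD : M.toBlocks₂₂.det = -(M (Sum.inr 0) (Sum.inr 1) * M (Sum.inr 1) (Sum.inr 0)) := by
      simp [Matrix.det_fin_two, Matrix.toBlocks₂₂, h11]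
    have : Invertible M.toBlocks₂₂ :=
      M.toBlocks₂₂.invertibleOfIsUnitDet (hD ▸ (neg_ne_zero.mpr hb).isUnit)
    -- the only entry of `D⁻¹` that meets the possibly nonzero parts of `B` and `C`
    have hinv : M.toBlocks₂₂⁻¹ 0 0 = 0 := by
      rw [Matrix.inv_def, Matrix.adjugate_fin_two]
      simp [Matrix.toBlocks₂₂, h11]
    have hBDC : M.toBlocks₁₂ * ⅟M.toBlocks₂₂ * M.toBlocks₂₁ = 0 := by
      ext i j
      simp [Matrix.mul_apply, Fin.sum_univ_two, Matrix.toBlocks₁₂, Matrix.toBlocks₂₁, hcol, hrow,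
        hinv]
    conv_lhs => rw [← M.fromBlocks_toBlocks]
    rw [Matrix.det_fromBlocks₂₂, hBDC, sub_zero, hD]

def castSuccSumLastEquiv (p : ℕ) : (Fin p ⊕ Fin p) ⊕ Fin 2 ≃ Fin (p + 1) ⊕ Fin (p + 1) where
  toFun := Sum.elim (Sum.map Fin.castSucc Fin.castSucc)
    ![Sum.inl (Fin.last p), Sum.inr (Fin.last p)]
  invFun := Sum.elim (Fin.lastCases (Sum.inr 0) (Sum.inl ∘ Sum.inl))
    (Fin.lastCases (Sum.inr 1) (Sum.inl ∘ Sum.inr))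
  left_inv := by
    rintro ((l | l) | k)
    · simp
    · simp
    · fin_cases k <;> simp
  right_inv := by
    rintro (i | i) <;> induction i using Fin.lastCases <;> simp

lemma det_hessian_energyE_padLast {n : ℕ} (G : SimpleGraph (Fin n)) [DecidableRel G.Adj] {p : ℕ}
    (x : (Fin p → ℝ) × (Fin p → ℝ)) :
    (hessian (energyE n G (p + 1)) (padLast p x)).det =
      -pderiv' (pderiv' (energyE n G (p + 1)) (Sum.inr (Fin.last p))) (Sum.inl (Fin.last p))
          (padLast p x) ^ 2 * (hessian (energyE n G p) x).det := by
  set H := hessian (energyE n G (p + 1)) (padLast p x)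
  have hsymm (a b) : H a b = H b a :=
    fderiv_fderiv_apply_comm (contDiff_energyE G (p + 1)) _ _ _
  have hx : (padLast p x).1 (Fin.last p) = 0 := by simp [padLast_apply]
  have hzero {a} (ha : a ≠ Sum.inl (Fin.last p)) : H a (Sum.inr (Fin.last p)) = 0 :=
    pderiv'_pderiv'_gamma_last_eq_zero G hx ha
  have hne (c : Fin p ⊕ Fin p) : castSuccSumLastEquiv p (Sum.inl c) ≠ Sum.inl (Fin.last p) := by
    rcases c with l | l <;> simp [castSuccSumLastEquiv, (Fin.castSucc_lt_last l).ne]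
  rw [← Matrix.det_submatrix_equiv_self (castSuccSumLastEquiv p) H,
    Matrix.det_eq_neg_mul_det_toBlocks₁₁, hessian_energyE_eq_submatrix]
  · simp [castSuccSumLastEquiv, H, hsymm (Sum.inr _), sq]
    rfl
  · exact fun i => hzero (hne i)
  · exact fun j => (hsymm _ _).trans (hzero (hne j))
  · exact hzero (by simp [castSuccSumLastEquiv])

theorem stmt8_general (n : ℕ) (G : SimpleGraph (Fin n)) [DecidableRel G.Adj]
    (p : ℕ) (β γ : Fin p → ℝ) :
    let Γ := padded (β, γ) (Fin.last p) (Fin.last p)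
    let b := pderiv' (pderiv' (energyE n G (p + 1)) (Sum.inr (Fin.last p)))
      (Sum.inl (Fin.last p)) Γ
    ((b : ℝ) : ℂ) =
        star (qaoaState n G β γ) ⬝ᵥ
          (commMat (commMat (hamB n) (hamC n G)) (hamC n G)).mulVec (qaoaState n G β γ) ∧
    pderiv' (pderiv' (energyE n G (p + 1)) (Sum.inr (Fin.last p))) (Sum.inr (Fin.last p)) Γ = 0 ∧
    (b ≠ 0 →
      (hessian (energyE n G (p + 1)) Γ).det = -b ^ 2 * (hessian (energyE n G p) (β, γ)).det) := by
  intro Γ b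
  have hΓ : Γ.1 (Fin.last p) = 0 := by simp [Γ, padded]
  exact ⟨ofReal_pderiv'_pderiv'_beta_gamma_last G β γ,
    pderiv'_pderiv'_gamma_last_eq_zero G hΓ Sum.inr_ne_inl,
    fun _ => det_hessian_energyE_padLast G (β, γ)⟩

/-- Hessian determinant at the last-layer padded point (case i). -/
theorem stmt8 (n : ℕ) (hn : 1 ≤ n) (G : SimpleGraph (Fin n)) [DecidableRel G.Adj]
    (p : ℕ) (hp : 1 ≤ p) (β γ : Fin p → ℝ)
    (hcrit : fderiv ℝ (energyE n G p) (β, γ) = 0) :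
    let Γ := padded (β, γ) (Fin.last p) (Fin.last p)
    let b := pderiv' (pderiv' (energyE n G (p + 1)) (Sum.inr (Fin.last p)))
      (Sum.inl (Fin.last p)) Γ
    ((b : ℝ) : ℂ) =
        star (qaoaState n G β γ) ⬝ᵥ
          (commMat (commMat (hamB n) (hamC n G)) (hamC n G)).mulVec (qaoaState n G β γ) ∧
    pderiv' (pderiv' (energyE n G (p + 1)) (Sum.inr (Fin.last p))) (Sum.inr (Fin.last p)) Γ = 0 ∧
    (b ≠ 0 →
      (hessian (energyE n G (p + 1)) Γ).det = -b ^ 2 * (hessian (energyE n G p) (β, γ)).det) :=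
  stmt8_general n G p β γ
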